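/- arXiv:2406.19490 — 2 statements merged into one kernel-verified Lean document; each statement's English description precedes it below -/
import Mathlib

section
/- For every w ∈ [0,1] and t ∈ [0, π], we have 1 + t + 2·sin(t)/(w+1) ≤ 1 + arccos(-(w+1)/2) + 2·sin(arccos(-(w+1)/2))/(w+1). -/
open Real Set

lemma sin_tangent_aux {s t : ℝ} (hs0 : 0 ≤ s) (hsp : s ≤ π) (ht0 : 0 ≤ t) (htp : t ≤ π) :
    Real.sin t ≤ Real.sin s + Real.cos s * (t - s) := by
  rcases lt_trichotomy t s with h | h | h
  · obtain ⟨c, hc, hc'⟩ := exists_hasDerivAt_eq_slope Real.sin Real.cos h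
      Real.continuousOn_sin (fun x _ => Real.hasDerivAt_sin x)
    have hcs : Real.cos s ≤ Real.cos c :=
      Real.cos_le_cos_of_nonneg_of_le_pi (by linarith [hc.1]) hsp (le_of_lt hc.2)
    have heq : Real.cos c * (s - t) = Real.sin s - Real.sin t :=
      (eq_div_iff (sub_ne_zero.mpr h.ne')).mp hc'
    nlinarith [heq, hcs]
  · simp [h]
  · obtain ⟨c, hc, hc'⟩ := exists_hasDerivAt_eq_slope Real.sin Real.cos h
      Real.continuousOn_sin (fun x _ => Real.hasDerivAt_sin x)
    have hcs : Real.cos c ≤ Real.cos s :=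
      Real.cos_le_cos_of_nonneg_of_le_pi hs0 (by linarith [hc.2]) (le_of_lt hc.1)
    have heq : Real.cos c * (t - s) = Real.sin t - Real.sin s :=
      (eq_div_iff (sub_ne_zero.mpr h.ne')).mp hc'
    nlinarith [heq, hcs]

theorem stmt_1 (w : ℝ) (hw : w ∈ Set.Icc (0:ℝ) 1) (t : ℝ) (ht : t ∈ Set.Icc 0 π) :
    1 + t + 2 * Real.sin t / (w + 1) ≤
      1 + Real.arccos (-(w + 1) / 2) +
        2 * Real.sin (Real.arccos (-(w + 1) / 2)) / (w + 1) := by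
  obtain ⟨hw0, hw1⟩ := hw
  obtain ⟨ht0, htp⟩ := ht
  set s := Real.arccos (-(w + 1) / 2) with hs
  have hx1 : (-1 : ℝ) ≤ -(w + 1) / 2 := by linarith
  have hx2 : -(w + 1) / 2 ≤ 1 := by linarith
  have hcos : Real.cos s = -(w + 1) / 2 := Real.cos_arccos hx1 hx2
  have hs0 : 0 ≤ s := Real.arccos_nonneg _
  have hsp : s ≤ π := Real.arccos_le_pi _
  have key := sin_tangent_aux hs0 hsp ht0 htp
  have hwpos : (0:ℝ) < w + 1 := by linarith
  have h2 : 2 * Real.sin t ≤ 2 * Real.sin s - (t - s) * (w + 1) := by nlinarith [key, hcos]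
  have h3 : 2 * Real.sin t / (w + 1) ≤ (2 * Real.sin s - (t - s) * (w + 1)) / (w + 1) := by
    gcongr
  have h4 : (t - s) * (w + 1) / (w + 1) = t - s := mul_div_cancel_right₀ _ (ne_of_gt hwpos)
  rw [sub_div, h4] at h3
  linarith
end

section
/- A 1-Lipschitz path γ : [0, T] → ℝ² with γ(0) = (0,0) satisfies: the arc-length measure of the set of points on the unit circle visited by γ is at most max(0, T − 1). -/
open Real Set MeasureTheory
open scoped ENNReal NNReal

noncomputable def pt (x y : ℝ) : EuclideanSpace ℝ (Fin 2) := WithLp.toLp 2 ![x, y]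

noncomputable def cpt (θ : ℝ) : EuclideanSpace ℝ (Fin 2) := pt (Real.cos θ) (Real.sin θ)

lemma cpt_apply_zero (θ : ℝ) : cpt θ 0 = Real.cos θ := rfl
lemma cpt_apply_one (θ : ℝ) : cpt θ 1 = Real.sin θ := rfl

lemma norm_cpt (θ : ℝ) : ‖cpt θ‖ = 1 := by
  rw [EuclideanSpace.norm_eq]
  simp [Fin.sum_univ_two, cpt_apply_zero, cpt_apply_one, Real.norm_eq_abs, sq_abs,
    Real.sin_sq_add_cos_sq]

lemma norm_cpt_sub (θ φ : ℝ) : ‖cpt θ - cpt φ‖ = 2 * |Real.sin ((θ - φ)/2)| := by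
  rw [EuclideanSpace.norm_eq]
  have h0 : (cpt θ - cpt φ) 0 = Real.cos θ - Real.cos φ := rfl
  have h1 : (cpt θ - cpt φ) 1 = Real.sin θ - Real.sin φ := rfl
  have key : (Real.cos θ - Real.cos φ)^2 + (Real.sin θ - Real.sin φ)^2
      = (2 * |Real.sin ((θ - φ)/2)|)^2 := by
    have h3 := Real.cos_sub θ φ
    have h4 := Real.cos_two_mul' ((θ - φ)/2)
    rw [show 2 * ((θ - φ)/2) = θ - φ by ring] at h4
    have h5 := Real.sin_sq_add_cos_sq ((θ - φ)/2)
    have h6 := Real.sin_sq_add_cos_sq θ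
    have h7 := Real.sin_sq_add_cos_sq φ
    have h8 : |Real.sin ((θ - φ)/2)|^2 = Real.sin ((θ - φ)/2)^2 := sq_abs _
    nlinarith [h3, h4, h5, h6, h7, h8]
  rw [Fin.sum_univ_two, h0, h1]
  simp only [Real.norm_eq_abs, sq_abs]
  rw [key, Real.sqrt_sq (by positivity)]

lemma cpt_inj {θ φ : ℝ} (h : |θ - φ| < 2 * π) (he : cpt θ = cpt φ) : θ = φ := by
  have hc : Real.cos θ = Real.cos φ := congrArg (fun v => v 0) he
  have hs : Real.sin θ = Real.sin φ := congrArg (fun v => v 1) he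
  have h1 : Real.cos (θ - φ) = 1 := by
    rw [Real.cos_sub, hc, hs]
    rw [← Real.sin_sq_add_cos_sq φ]; ring
  have h2 := (Real.cos_eq_one_iff_of_lt_of_lt (by cases abs_lt.1 h; linarith)
    (by cases abs_lt.1 h; linarith)).1 h1
  linarith

lemma continuous_cpt : Continuous cpt := by
  have : cpt = (EuclideanSpace.equiv (Fin 2) ℝ).symm ∘ (fun θ => ![Real.cos θ, Real.sin θ]) := rfl
  rw [this]
  refine (EuclideanSpace.equiv (Fin 2) ℝ).symm.continuous.comp ?_
  refine continuous_pi fun i => ?_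
  fin_cases i <;> simp <;> fun_prop

lemma chord_lower {θ φ h : ℝ} (hh1 : h ≤ 1) (hd : |θ - φ| ≤ h) :
    Real.cos (h/2) * |θ - φ| ≤ ‖cpt θ - cpt φ‖ := by
  rw [norm_cpt_sub]
  set d := |θ - φ| with hdd
  have hd0 : 0 ≤ d := abs_nonneg _
  have hpi : (3:ℝ) < π := Real.pi_gt_three
  have habs : |Real.sin ((θ - φ)/2)| = Real.sin (d/2) := by
    have hdh : d ≤ 1 := le_trans hd hh1
    rcases abs_cases (θ - φ) with ⟨h1, h2⟩ | ⟨h1, h2⟩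
    · rw [hdd, h1, abs_of_nonneg (Real.sin_nonneg_of_nonneg_of_le_pi (by linarith)
        (by rw [hdd, h1] at hdh; linarith))]
    · rw [hdd, h1, abs_of_nonpos (Real.sin_nonpos_of_nonpos_of_neg_pi_le (by linarith)
        (by rw [hdd, h1] at hdh; linarith)), ← Real.sin_neg]
      ring_nf
  rw [habs]
  have hcos1 : Real.cos (h/2) ≤ Real.cos (d/2) :=
    Real.cos_le_cos_of_nonneg_of_le_pi (by linarith) (by linarith) (by linarith)
  have hcos2 : 0 < Real.cos (d/2) :=
    Real.cos_pos_of_mem_Ioo ⟨by linarith, by linarith⟩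
  have htan : d/2 ≤ Real.tan (d/2) := Real.le_tan (by linarith) (by linarith)
  rw [Real.tan_eq_sin_div_cos, le_div_iff₀ hcos2] at htan
  nlinarith [hcos2, hcos1, htan]

lemma injOn_cpt_window {a b : ℝ} (hba : b - a ≤ 6) : Set.InjOn cpt (Set.Icc a b) := by
  intro θ hθ φ hφ he
  refine cpt_inj ?_ he
  have hpi : (3:ℝ) < π := Real.pi_gt_three
  rw [abs_sub_lt_iff]
  exact ⟨by linarith [hθ.2, hφ.1], by linarith [hφ.2, hθ.1]⟩

lemma measurableSet_cpt_Ico {a b : ℝ} (hba : b - a ≤ 6) :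
    MeasurableSet (cpt '' Set.Ico a b) := by
  rcases le_or_gt b a with hle | hlt
  · rw [Set.Ico_eq_empty (by exact fun hc => absurd hc (not_lt.2 hle)), Set.image_empty]
    exact MeasurableSet.empty
  · have hinj := injOn_cpt_window hba
    have himg : cpt '' Set.Ico a b = (cpt '' Set.Icc a b) \ {cpt b} := by
      ext p
      constructor
      · rintro ⟨θ, hθ, rfl⟩
        refine ⟨⟨θ, ⟨hθ.1, hθ.2.le⟩, rfl⟩, ?_⟩
        simp only [Set.mem_singleton_iff]
        intro hc
        have := hinj ⟨hθ.1, hθ.2.le⟩ (Set.right_mem_Icc.2 (by linarith)) hc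
        exact absurd this (ne_of_lt hθ.2)
      · rintro ⟨⟨θ, hθ, rfl⟩, hne⟩
        refine ⟨θ, ⟨hθ.1, lt_of_le_of_ne hθ.2 ?_⟩, rfl⟩
        intro hc; exact hne (by rw [hc]; exact Set.mem_singleton _)
    rw [himg]
    exact ((isCompact_Icc.image continuous_cpt).measurableSet).diff
      (measurableSet_singleton _)

set_option maxHeartbeats 1000000 in
lemma key (T : ℝ) (hT : 1 ≤ T) (γ : ℝ → EuclideanSpace ℝ (Fin 2))
    (hγ : LipschitzOnWith 1 γ (Set.Icc 0 T)) (h0 : γ 0 = 0) (N : ℕ) (hN : 7 ≤ N) :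
    volume {θ : ℝ | θ ∈ Set.Ico 0 (2 * π) ∧ ∃ t ∈ Set.Icc 0 T, γ t = cpt θ}
      ≤ ENNReal.ofReal ((Real.cos (π / N))⁻¹) * ENNReal.ofReal (T - 1) := by
  have hpi3 : (3:ℝ) < π := Real.pi_gt_three
  have hpi4 : π < 3.15 := by have := Real.pi_lt_d2; linarith
  have hN7 : (7:ℝ) ≤ N := by exact_mod_cast hN
  have hN0 : (0:ℝ) < N := by linarith
  set h : ℝ := 2 * π / N with hdef
  have hh0 : 0 < h := by positivity
  have hh1 : h ≤ 1 := by rw [hdef, div_le_one hN0]; linarith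
  have hh2 : h / 2 = π / N := by rw [hdef]; ring
  have hcos : 0 < Real.cos (h/2) :=
    Real.cos_pos_of_mem_Ioo ⟨by
      have : 0 < π / (N:ℝ) := by positivity
      rw [hh2]; linarith, by
      have : π / (N:ℝ) ≤ π / 7 := by
        apply div_le_div_of_nonneg_left (by linarith) (by norm_num) hN7
      rw [hh2]; linarith⟩
  set A := {θ : ℝ | θ ∈ Set.Ico 0 (2 * π) ∧ ∃ t ∈ Set.Icc 0 T, γ t = cpt θ} with hAdef
  set KT : Set (EuclideanSpace ℝ (Fin 2)) := γ '' Set.Icc 0 T with hKTdef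
  have hA : A = Set.Ico 0 (2 * π) ∩ cpt ⁻¹' KT := by
    ext θ
    simp only [hAdef, Set.mem_setOf_eq, Set.mem_inter_iff, Set.mem_preimage, hKTdef,
      Set.mem_image]
  set I : ℕ → Set ℝ := fun k => Set.Ico (k * h) ((k + 1) * h) with hIdef
  set S : ℕ → Set (EuclideanSpace ℝ (Fin 2)) := fun k => cpt '' (A ∩ I k) with hSdef
  have hwin : ∀ k : ℕ, A ∩ I k ⊆ Set.Icc ((k:ℝ) * h) (((k:ℝ) + 1) * h) := fun k x hx =>
    ⟨hx.2.1, hx.2.2.le⟩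
  have hinj : ∀ k : ℕ, Set.InjOn cpt (A ∩ I k) := fun k =>
    (injOn_cpt_window (by nlinarith)).mono (hwin k)
  have hcover : A ⊆ ⋃ k ∈ Finset.range N, A ∩ I k := by
    intro θ hθ
    have hθ0 : 0 ≤ θ := hθ.1.1
    have hθ2 : θ < 2 * π := hθ.1.2
    have hθh : 0 ≤ θ / h := by positivity
    have hfl : (⌊θ / h⌋₊ : ℝ) * h ≤ θ := by
      calc (⌊θ / h⌋₊ : ℝ) * h ≤ (θ / h) * h :=
            mul_le_mul_of_nonneg_right (Nat.floor_le hθh) hh0.le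
        _ = θ := div_mul_cancel₀ θ (ne_of_gt hh0)
    have hfu : θ < ((⌊θ / h⌋₊ : ℝ) + 1) * h := by
      calc θ = (θ / h) * h := (div_mul_cancel₀ θ (ne_of_gt hh0)).symm
        _ < ((⌊θ / h⌋₊ : ℝ) + 1) * h :=
            mul_lt_mul_of_pos_right (Nat.lt_floor_add_one (θ / h)) hh0
    refine Set.mem_iUnion₂.mpr ⟨⌊θ / h⌋₊, ?_, hθ, hfl, hfu⟩
    rw [Finset.mem_range, Nat.floor_lt hθh, div_lt_iff₀ hh0]
    calc θ < 2 * π := hθ2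
      _ = N * h := by rw [hdef]; field_simp
  set K : ℝ≥0 := Real.toNNReal ((Real.cos (h/2))⁻¹) with hKdef
  have hKcoe : (K : ℝ) = (Real.cos (h/2))⁻¹ := Real.coe_toNNReal _ (by positivity)
  have step3 : ∀ k : ℕ, volume (A ∩ I k) ≤ (K : ℝ≥0∞) * μH[1] (S k) := by
    intro k
    set f := Function.invFunOn cpt (A ∩ I k) with hf
    have himg : f '' S k = A ∩ I k := (hinj k).invFunOn_image Set.Subset.rfl
    have hlip : LipschitzOnWith K f (S k) := by
      rw [lipschitzOnWith_iff_dist_le_mul]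
      rintro p ⟨α, hα, rfl⟩ q ⟨β, hβ, rfl⟩
      have hfa : f (cpt α) = α := (hinj k).leftInvOn_invFunOn hα
      have hfb : f (cpt β) = β := (hinj k).leftInvOn_invFunOn hβ
      rw [hfa, hfb, Real.dist_eq, dist_eq_norm]
      have hab : |α - β| ≤ h := by
        have h1 := (hwin k hα).1; have h2 := (hwin k hα).2
        have h3 := (hwin k hβ).1; have h4 := (hwin k hβ).2
        rw [abs_sub_le_iff]; constructor <;> nlinarith
      have hch := chord_lower hh1 hab
      calc |α - β| = (Real.cos (h/2))⁻¹ * (Real.cos (h/2) * |α - β|) := by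
            field_simp
        _ ≤ (Real.cos (h/2))⁻¹ * ‖cpt α - cpt β‖ :=
            mul_le_mul_of_nonneg_left hch (by positivity)
        _ = K * ‖cpt α - cpt β‖ := by rw [hKcoe]
    calc volume (A ∩ I k) = μH[1] (A ∩ I k) := by
          rw [MeasureTheory.hausdorffMeasure_real]
      _ = μH[1] (f '' S k) := by rw [himg]
      _ ≤ (K : ℝ≥0∞) ^ (1:ℝ) * μH[1] (S k) := hlip.hausdorffMeasure_image_le zero_le_one
      _ = (K : ℝ≥0∞) * μH[1] (S k) := by rw [ENNReal.rpow_one]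
  have hKTc : IsCompact KT := isCompact_Icc.image_of_continuousOn hγ.continuousOn
  have hSmeas : ∀ k : ℕ, MeasurableSet (S k) := by
    intro k
    have e1 : A ∩ I k
        = (Set.Ico (max 0 ((k:ℝ)*h)) (min (2*π) (((k:ℝ)+1)*h))) ∩ cpt ⁻¹' KT := by
      rw [hA, ← Set.Ico_inter_Ico, Set.inter_right_comm]
    have e2 : S k = cpt '' (Set.Ico (max 0 ((k:ℝ)*h)) (min (2*π) (((k:ℝ)+1)*h))) ∩ KT := by
      rw [hSdef]
      simp only []
      rw [e1, Set.image_inter_preimage]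
    rw [e2]
    refine (measurableSet_cpt_Ico ?_).inter hKTc.measurableSet
    have h1 : min (2*π) (((k:ℝ)+1)*h) ≤ ((k:ℝ)+1)*h := min_le_right _ _
    have h2 : (k:ℝ)*h ≤ max 0 ((k:ℝ)*h) := le_max_right _ _
    nlinarith
  have hSdisj : (↑(Finset.range N) : Set ℕ).PairwiseDisjoint S := by
    intro k _ j _ hkj
    refine Set.disjoint_left.mpr ?_
    rintro p ⟨α, hα, rfl⟩ ⟨β, hβ, hba⟩
    have hαI : α ∈ Set.Ico (0:ℝ) (2*π) := hα.1.1
    have hβI : β ∈ Set.Ico (0:ℝ) (2*π) := hβ.1.1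
    have h2π : |β - α| < 2 * π := by
      rw [abs_sub_lt_iff]
      exact ⟨by linarith [hβI.2, hαI.1], by linarith [hαI.2, hβI.1]⟩
    have heq : β = α := cpt_inj h2π hba
    have hαk := hα.2
    have hβj := hβ.2
    rw [heq] at hβj
    rcases Nat.lt_or_ge k j with hlt | hge
    · have : ((k:ℝ)+1) ≤ (j:ℝ) := by exact_mod_cast hlt
      have := hαk.2; have := hβj.1
      nlinarith
    · have hjk : j < k := lt_of_le_of_ne hge (Ne.symm hkj)
      have : ((j:ℝ)+1) ≤ (k:ℝ) := by exact_mod_cast hjk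
      have := hβj.2; have := hαk.1
      nlinarith
  have hSsub : (⋃ k ∈ Finset.range N, S k) ⊆ γ '' Set.Icc 1 T := by
    intro p hp
    simp only [Set.mem_iUnion] at hp
    obtain ⟨k, -, α, hα, rfl⟩ := hp
    obtain ⟨hIco, t, ht, hγt⟩ := hα.1
    have hnorm : ‖γ t‖ = 1 := by rw [hγt, norm_cpt]
    have hdist : dist (γ t) (γ 0) ≤ 1 * dist t 0 := by
      have := hγ.dist_le_mul t ht 0 (Set.left_mem_Icc.2 (by linarith))
      simpa using this
    have ht1 : 1 ≤ t := by
      rw [h0, dist_zero_right, hnorm, Real.dist_eq, sub_zero, abs_of_nonneg ht.1,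
        one_mul] at hdist
      exact hdist
    exact ⟨t, ⟨ht1, ht.2⟩, hγt⟩
  have hH : μH[1] (γ '' Set.Icc 1 T) ≤ ENNReal.ofReal (T - 1) := by
    have hlip : LipschitzOnWith 1 γ (Set.Icc 1 T) :=
      hγ.mono (Set.Icc_subset_Icc_left (by linarith))
    calc μH[1] (γ '' Set.Icc 1 T) ≤ ((1:ℝ≥0) : ℝ≥0∞) ^ (1:ℝ) * μH[1] (Set.Icc (1:ℝ) T) :=
          hlip.hausdorffMeasure_image_le zero_le_one
      _ = μH[1] (Set.Icc (1:ℝ) T) := by simp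
      _ = volume (Set.Icc (1:ℝ) T) := by rw [MeasureTheory.hausdorffMeasure_real]
      _ = ENNReal.ofReal (T - 1) := by rw [Real.volume_Icc]
  calc volume A ≤ volume (⋃ k ∈ Finset.range N, A ∩ I k) := measure_mono hcover
    _ ≤ ∑ k ∈ Finset.range N, volume (A ∩ I k) := measure_biUnion_finset_le _ _
    _ ≤ ∑ k ∈ Finset.range N, (K : ℝ≥0∞) * μH[1] (S k) :=
        Finset.sum_le_sum fun k _ => step3 k
    _ = (K : ℝ≥0∞) * ∑ k ∈ Finset.range N, μH[1] (S k) := by rw [Finset.mul_sum]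
    _ = (K : ℝ≥0∞) * μH[1] (⋃ k ∈ Finset.range N, S k) := by
        rw [measure_biUnion_finset hSdisj fun k _ => hSmeas k]
    _ ≤ (K : ℝ≥0∞) * ENNReal.ofReal (T - 1) := by
        gcongr
        exact le_trans (measure_mono hSsub) hH
    _ = ENNReal.ofReal ((Real.cos (π / N))⁻¹) * ENNReal.ofReal (T - 1) := by
        rw [← hh2, hKdef, ENNReal.ofReal]
        rfl

theorem stmt_12 (T : ℝ) (hT : 0 ≤ T) (γ : ℝ → EuclideanSpace ℝ (Fin 2))
    (hγ : LipschitzOnWith 1 γ (Set.Icc 0 T)) (h0 : γ 0 = 0) :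
    volume {θ : ℝ | θ ∈ Set.Ico 0 (2 * π) ∧
        ∃ t ∈ Set.Icc 0 T, γ t = pt (Real.cos θ) (Real.sin θ)}
      ≤ ENNReal.ofReal (max 0 (T - 1)) := by
  rcases lt_or_ge T 1 with hT1 | hT1
  · have hempty : {θ : ℝ | θ ∈ Set.Ico 0 (2 * π) ∧
        ∃ t ∈ Set.Icc 0 T, γ t = pt (Real.cos θ) (Real.sin θ)} = ∅ := by
      ext θ
      simp only [Set.mem_setOf_eq, Set.mem_empty_iff_false, iff_false, not_and]
      rintro hIco ⟨t, ht, hγt⟩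
      have hnorm : ‖γ t‖ = 1 := by rw [hγt]; exact norm_cpt θ
      have hdist : dist (γ t) (γ 0) ≤ 1 * dist t 0 := by
        simpa using hγ.dist_le_mul t ht 0 (Set.left_mem_Icc.2 hT)
      rw [h0, dist_zero_right, hnorm, Real.dist_eq, sub_zero, abs_of_nonneg ht.1,
        one_mul] at hdist
      linarith [ht.2]
    rw [hempty]
    simp
  · have hmax : max 0 (T - 1) = T - 1 := max_eq_right (by linarith)
    rw [hmax]
    have hlim : Filter.Tendsto
        (fun N : ℕ => ENNReal.ofReal ((Real.cos (π / N))⁻¹) * ENNReal.ofReal (T - 1))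
        Filter.atTop (nhds (ENNReal.ofReal (T - 1))) := by
      have h1 : Filter.Tendsto (fun N : ℕ => π / (N:ℝ)) Filter.atTop (nhds 0) :=
        tendsto_const_div_atTop_nhds_zero_nat π
      have h2 : Filter.Tendsto (fun N : ℕ => (Real.cos (π / N))⁻¹) Filter.atTop (nhds 1) := by
        have hc := (Real.continuous_cos.tendsto 0).comp h1
        rw [Real.cos_zero] at hc
        simpa using hc.inv₀ one_ne_zero
      have h3 := (ENNReal.continuous_ofReal.tendsto 1).comp h2
      rw [ENNReal.ofReal_one] at h3
      simpa using ENNReal.Tendsto.mul_const h3 (Or.inr ENNReal.ofReal_ne_top)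
    refine ge_of_tendsto hlim ?_
    filter_upwards [Filter.eventually_ge_atTop 7] with N hN
    exact key T hT1 γ hγ h0 N hN
end
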